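/- For a finite group G and integer n ≥ 2, the set V = {(n, a, k) : a ∈ G, 1 ≤ k ≤ n − 1} is a prime subset of the Brandt semigroup B(G, n), and its cardinality is (n − 1)·|G|. -/

import Mathlib

/-- A nonempty subset `U` of a (multiplicative) semigroup is *prime* if
`a * b ∈ U` implies `a ∈ U` or `b ∈ U`. -/
def IsPrimeSubset {Γ : Type*} [Mul Γ] (U : Set Γ) : Prop :=
  U.Nonempty ∧ ∀ a b : Γ, a * b ∈ U → a ∈ U ∨ b ∈ U

/-- The Brandt semigroup `B(G, n)` over a group `G`: underlying set
`([n] × G × [n]) ∪ {0}`, encoded as `Option (Fin n × G × Fin n)` with `none`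
playing the role of the zero element `0`. -/
def Brandt (G : Type*) (n : ℕ) : Type _ := Option (Fin n × G × Fin n)

namespace Brandt

/-- The zero element `0` of the Brandt semigroup. -/
def zero {G : Type*} {n : ℕ} : Brandt G n := none

/-- The element `(i, a, j)` of the Brandt semigroup. -/
def elem {G : Type*} {n : ℕ} (i : Fin n) (a : G) (j : Fin n) : Brandt G n := some (i, a, j)

/-- Multiplication: `(i, a, j)(k, b, l) = (i, ab, l)` if `j = k` and `0` otherwise,
with `0` acting as a zero element. -/
def mul {G : Type*} [Group G] {n : ℕ} : Brandt G n → Brandt G n → Brandt G n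
  | none, _ => none
  | some _, none => none
  | some (i, a, j), some (k, b, l) => if j = k then some (i, a * b, l) else none

instance (G : Type*) [Group G] (n : ℕ) : Semigroup (Brandt G n) where
  mul := mul
  mul_assoc x y z := by
    show mul (mul x y) z = mul x (mul y z)
    rcases x with _ | ⟨i, a, j⟩ <;> rcases y with _ | ⟨k, b, l⟩ <;> rcases z with _ | ⟨m, c, p⟩
    all_goals try exact rfl
    case some.some.none =>
      by_cases h1 : j = k <;> simp only [mul, h1, ↓reduceIte] <;> exact rfl
    case some.some.some =>
      by_cases h1 : j = k <;> by_cases h2 : l = m <;>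
        simp only [mul, h1, h2, ↓reduceIte, mul_assoc] <;> exact rfl

instance (G : Type*) [Fintype G] (n : ℕ) : Fintype (Brandt G n) :=
  inferInstanceAs (Fintype (Option (Fin n × G × Fin n)))

instance (G : Type*) [DecidableEq G] (n : ℕ) : DecidableEq (Brandt G n) :=
  inferInstanceAs (DecidableEq (Option (Fin n × G × Fin n)))

end Brandt

/-! A product `x * y` of two elements of `B(G, n)` equals `(i, c, l)` only if `x = (i, a, j)` and
`y = (j, b, l)` for some middle index `j`. For `V = {(i, a, k) : k ≠ i}` this forces `x ∈ V`
when `j ≠ i`, and `y ∈ V` when `j = i` (as then `y = (i, b, l)` with `l ≠ i`). Counting `V` is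
counting the pairs `(a, k)`. -/

namespace Brandt

variable {G : Type*} {n : ℕ}

def rowSet (i : Fin n) (K : Set (Fin n)) : Set (Brandt G n) :=
  {x | ∃ a, ∃ k ∈ K, x = elem i a k}

@[simp]
theorem elem_inj {i i' j j' : Fin n} {a a' : G} :
    (elem i a j : Brandt G n) = elem i' a' j' ↔ i = i' ∧ a = a' ∧ j = j' := by
  change (some (i, a, j) : Option (Fin n × G × Fin n)) = some (i', a', j') ↔ _
  simp

theorem ncard_rowSet (i : Fin n) (K : Set (Fin n)) :
    (rowSet (G := G) i K).ncard = Nat.card G * K.ncard := by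
  have himage :
      rowSet (G := G) i K = (fun p : G × Fin n => elem i p.1 p.2) '' (Set.univ ×ˢ K) := by
    ext x
    simp [rowSet, eq_comm]
  rw [himage, Set.ncard_image_of_injective _ fun p q h => ?_, Set.ncard_prod, Set.ncard_univ]
  obtain ⟨-, h₁, h₂⟩ := elem_inj.mp h
  exact Prod.ext h₁ h₂

variable [Group G]

theorem elem_mul_elem (i j l : Fin n) (a b : G) : elem i a j * elem j b l = elem i (a * b) l :=
  if_pos rfl

theorem elem_mul_elem_of_ne {j k : Fin n} (i l : Fin n) (a b : G) (h : j ≠ k) :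
    elem i a j * elem k b l = zero :=
  if_neg h

theorem mul_eq_elem {x y : Brandt G n} {i l : Fin n} {c : G} (h : x * y = elem i c l) :
    ∃ (a b : G) (j : Fin n), x = elem i a j ∧ y = elem j b l := by
  change mul x y = some (i, c, l) at h
  rcases x with _ | ⟨i', a, j⟩ <;> rcases y with _ | ⟨j', b, l'⟩
  · cases h
  · cases h
  · cases h
  · by_cases hj : j = j'
    · subst hj
      obtain ⟨rfl, -, rfl⟩ := elem_inj.mp ((elem_mul_elem i' j l' a b).symm.trans h)
      exact ⟨a, b, j, rfl, rfl⟩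
    · nomatch (elem_mul_elem_of_ne i' l' a b hj).symm.trans h

theorem isPrimeSubset_rowSet {i : Fin n} {K : Set (Fin n)} (hK : K.Nonempty) (hiK : {i}ᶜ ⊆ K) :
    IsPrimeSubset (rowSet (G := G) i K) := by
  obtain ⟨k, hk⟩ := hK
  refine ⟨⟨elem i 1 k, 1, k, hk, rfl⟩, ?_⟩
  rintro x y ⟨c, l, hl, hxy⟩
  obtain ⟨a, b, j, rfl, rfl⟩ := mul_eq_elem hxy
  by_cases hj : j = i
  · subst hj
    exact Or.inr ⟨b, l, hl, rfl⟩
  · exact Or.inl ⟨a, j, hiK hj, rfl⟩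

end Brandt

/-- For a finite group `G` and `n ≥ 2`, the set `V = {(n, a, k) : a ∈ G, 1 ≤ k ≤ n - 1}`
is a prime subset of the Brandt semigroup `B(G, n)` of cardinality `(n - 1)|G|`.
(`Fin n` is identified with `[n] = {1, …, n}` via `x ↦ (x : ℕ) + 1`; the first index `n`
is the element `⟨n - 1, _⟩ : Fin n`, and `k ∈ [n - 1]` means `(k : ℕ) + 1 ≤ n - 1`.) -/
theorem brandt_zeta_set_isPrimeSubset {G : Type*} [Group G] [Fintype G]
    (n : ℕ) (hn : 2 ≤ n) :
    IsPrimeSubset {x : Brandt G n | ∃ (a : G) (k : Fin n),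
        (k : ℕ) + 1 ≤ n - 1 ∧ x = Brandt.elem ⟨n - 1, by omega⟩ a k} ∧
    ({x : Brandt G n | ∃ (a : G) (k : Fin n),
        (k : ℕ) + 1 ≤ n - 1 ∧ x = Brandt.elem ⟨n - 1, by omega⟩ a k}).ncard
      = (n - 1) * Fintype.card G := by
  set last : Fin n := ⟨n - 1, by omega⟩
  have hV : {x : Brandt G n | ∃ (a : G) (k : Fin n),
      (k : ℕ) + 1 ≤ n - 1 ∧ x = Brandt.elem last a k} = Brandt.rowSet last {last}ᶜ := by
    ext x
    refine exists_congr fun a => exists_congr fun k => and_congr_left fun _ => ?_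
    simp only [Set.mem_compl_singleton_iff, ne_eq, Fin.ext_iff, last]
    omega
  have hne : ({last}ᶜ : Set (Fin n)).Nonempty := by
    refine ⟨⟨0, by omega⟩, ?_⟩
    simp only [Set.mem_compl_singleton_iff, ne_eq, Fin.ext_iff, last]
    omega
  rw [hV]
  refine ⟨Brandt.isPrimeSubset_rowSet hne subset_rfl, ?_⟩
  rw [Brandt.ncard_rowSet, Set.ncard_compl, Set.ncard_singleton, Nat.card_fin,
    Nat.card_eq_fintype_card, mul_comm]
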